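/- Let M ⊆ N₁, N₂ ⊆ N be finite-dimensional von Neumann algebras with conditional expectations E^M, E₁, E₂ compatible with a common full-rank state. For a state ρ on N write ρⱼ := E_{j*}(ρ) and ρ_M := E^M_*(ρ). Then D(ρ‖ρ_M) ≤ D(ρ‖ρ₁) + D(ρ‖ρ₂) + log Tr[exp(−log ρ_M + log ρ₁ + log ρ₂)]. -/

import Mathlib

open Matrix ComplexOrder

noncomputable section

/-- Matrix logarithm via the functional calculus. -/
def matLog {d : ℕ} (A : Matrix (Fin d) (Fin d) ℂ) : Matrix (Fin d) (Fin d) ℂ :=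
  cfc Real.log A

/-- Matrix exponential (of a Hermitian matrix) via the functional calculus. -/
def matExp {d : ℕ} (A : Matrix (Fin d) (Fin d) ℂ) : Matrix (Fin d) (Fin d) ℂ :=
  cfc Real.exp A

/-- Quantum relative entropy `D(ρ‖σ) = Tr[ρ(log ρ − log σ)]`. -/
def relEnt {d : ℕ} (ρ σ : Matrix (Fin d) (Fin d) ℂ) : ℝ :=
  ((ρ * (matLog ρ - matLog σ)).trace).re

namespace ApproxTensorAux

/-- Gibbs' inequality (cross entropy bound). -/
lemma sum_mul_log_le {n : Type*} [Fintype n] (p q : n → ℝ)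
    (hp : ∀ i, 0 ≤ p i) (hq : ∀ i, 0 < q i)
    (hpq : ∑ i, q i ≤ ∑ i, p i) :
    ∑ i, p i * Real.log (q i) ≤ ∑ i, p i * Real.log (p i) := by
  have key : ∀ i, p i * Real.log (q i) - p i * Real.log (p i) ≤ q i - p i := by
    intro i
    rcases eq_or_lt_of_le (hp i) with h | h
    · simp only [← h, zero_mul, sub_zero, sub_self]
      exact (hq i).le
    · have hqp : 0 < q i / p i := div_pos (hq i) h
      have h1 := Real.log_le_sub_one_of_pos hqp
      rw [Real.log_div (hq i).ne' h.ne'] at h1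
      have h2 := mul_le_mul_of_nonneg_left h1 (hp i)
      have h3 : p i * (q i / p i - 1) = q i - p i := by
        field_simp
      nlinarith [h2, h3]
  have hsum := Finset.sum_le_sum (s := Finset.univ) (fun i _ => key i)
  rw [Finset.sum_sub_distrib, Finset.sum_sub_distrib] at hsum
  linarith

/-- The scalar core of the Peierls–Bogoliubov inequality. -/
lemma scalar_core {n : Type*} [Fintype n] (p h : n → ℝ) (c : n → n → ℝ)
    (hp : ∀ i, 0 ≤ p i) (hpsum : ∑ i, p i = 1)
    (hc : ∀ i j, 0 ≤ c i j) (hrow : ∀ i, ∑ j, c i j = 1) (hcol : ∀ j, ∑ i, c i j = 1) :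
    ∑ i, ∑ j, p i * h j * c i j ≤
      ∑ i, p i * Real.log (p i) + Real.log (∑ j, Real.exp (h j)) := by
  rcases isEmpty_or_nonempty n with hn | hn
  · simp at hpsum
  set r : n → ℝ := fun i => ∑ j, c i j * Real.exp (h j) with hrdef
  have hrpos : ∀ i, 0 < r i := by
    intro i
    have hex : ∃ j, 0 < c i j := by
      by_contra hcon
      push_neg at hcon
      have hz : ∀ j, c i j = 0 := fun j => le_antisymm (hcon j) (hc i j)
      have h0 : (∑ j, c i j) = 0 := by simp [hz]
      rw [hrow i] at h0
      norm_num at h0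
    obtain ⟨j0, hj0⟩ := hex
    exact Finset.sum_pos' (fun j _ => mul_nonneg (hc i j) (Real.exp_pos _).le)
      ⟨j0, Finset.mem_univ _, mul_pos hj0 (Real.exp_pos _)⟩
  set Z : ℝ := ∑ j, Real.exp (h j) with hZdef
  have hZpos : 0 < Z := Finset.sum_pos (fun j _ => Real.exp_pos _) Finset.univ_nonempty
  have hZr : ∑ i, r i = Z := by
    rw [hrdef, Finset.sum_comm, hZdef]
    refine Finset.sum_congr rfl fun j _ => ?_
    rw [← Finset.sum_mul, hcol j, one_mul]
  have step1 : ∀ i, ∑ j, h j * c i j ≤ Real.log (r i) := by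
    intro i
    have hj := convexOn_exp.map_sum_le (t := Finset.univ) (w := c i) (p := h)
      (fun j _ => hc i j) (hrow i) (fun j _ => Set.mem_univ _)
    have h2 : Real.exp (∑ j, c i j * h j) ≤ r i := by
      simpa [smul_eq_mul] using hj
    calc ∑ j, h j * c i j = ∑ j, c i j * h j := by
          exact Finset.sum_congr rfl fun j _ => mul_comm _ _
      _ = Real.log (Real.exp (∑ j, c i j * h j)) := (Real.log_exp _).symm
      _ ≤ Real.log (r i) := by
          rw [Real.log_le_log_iff (Real.exp_pos _) (hrpos i)]
          exact h2
  have step2 : ∑ i, p i * Real.log (r i) ≤ ∑ i, p i * Real.log (p i) + Real.log Z := by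
    have hqpos : ∀ i, 0 < r i / Z := fun i => div_pos (hrpos i) hZpos
    have hqsum : ∑ i, r i / Z ≤ ∑ i, p i := by
      rw [← Finset.sum_div, hZr, div_self hZpos.ne', hpsum]
    have gibbs := sum_mul_log_le p (fun i => r i / Z) hp hqpos hqsum
    have hexp : ∀ i, p i * Real.log (r i) = p i * Real.log (r i / Z) + p i * Real.log Z := by
      intro i
      rw [Real.log_div (hrpos i).ne' hZpos.ne']
      ring
    calc ∑ i, p i * Real.log (r i)
        = (∑ i, p i * Real.log (r i / Z)) + (∑ i, p i) * Real.log Z := by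
          rw [Finset.sum_mul, ← Finset.sum_add_distrib]
          exact Finset.sum_congr rfl fun i _ => hexp i
      _ ≤ (∑ i, p i * Real.log (p i)) + Real.log Z := by
          rw [hpsum, one_mul]
          exact add_le_add gibbs le_rfl
  calc ∑ i, ∑ j, p i * h j * c i j
      = ∑ i, p i * ∑ j, h j * c i j := by
        refine Finset.sum_congr rfl fun i _ => ?_
        rw [Finset.mul_sum]
        exact Finset.sum_congr rfl fun j _ => by ring
    _ ≤ ∑ i, p i * Real.log (r i) :=
        Finset.sum_le_sum fun i _ => mul_le_mul_of_nonneg_left (step1 i) (hp i)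
    _ ≤ ∑ i, p i * Real.log (p i) + Real.log Z := step2

/-- Trace of a conjugated diagonal matrix. -/
lemma trace_conj_diag {d : ℕ} (U : Matrix.unitaryGroup (Fin d) ℂ) (a : Fin d → ℝ) :
    ((U : Matrix (Fin d) (Fin d) ℂ) * diagonal (Complex.ofReal ∘ a) *
      star (U : Matrix (Fin d) (Fin d) ℂ)).trace = ((∑ i, a i : ℝ) : ℂ) := by
  rw [Matrix.trace_mul_cycle]
  rw [(Matrix.mem_unitaryGroup_iff').mp U.2, one_mul, Matrix.trace_diagonal]
  push_cast
  rfl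

/-- Trace of a product of two conjugated diagonal matrices. -/
lemma trace_conj_diag_mul {d : ℕ} (U V : Matrix.unitaryGroup (Fin d) ℂ) (a b : Fin d → ℝ) :
    (((U : Matrix (Fin d) (Fin d) ℂ) * diagonal (Complex.ofReal ∘ a) *
        star (U : Matrix (Fin d) (Fin d) ℂ)) *
      ((V : Matrix (Fin d) (Fin d) ℂ) * diagonal (Complex.ofReal ∘ b) *
        star (V : Matrix (Fin d) (Fin d) ℂ))).trace =
    ((∑ i, ∑ j, a i * b j *
        Complex.normSq ((star (U : Matrix (Fin d) (Fin d) ℂ) *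
          (V : Matrix (Fin d) (Fin d) ℂ)) i j) : ℝ) : ℂ) := by
  set Um : Matrix (Fin d) (Fin d) ℂ := (U : Matrix (Fin d) (Fin d) ℂ)
  set Vm : Matrix (Fin d) (Fin d) ℂ := (V : Matrix (Fin d) (Fin d) ℂ)
  set W : Matrix (Fin d) (Fin d) ℂ := star Um * Vm with hW
  set Da : Matrix (Fin d) (Fin d) ℂ := diagonal (Complex.ofReal ∘ a)
  set Db : Matrix (Fin d) (Fin d) ℂ := diagonal (Complex.ofReal ∘ b)
  have hassoc : (Um * Da * star Um) * (Vm * Db * star Vm)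
      = Um * (Da * (star Um * (Vm * (Db * star Vm)))) := by
    simp only [Matrix.mul_assoc]
  rw [hassoc, Matrix.trace_mul_comm]
  have hassoc2 : Da * (star Um * (Vm * (Db * star Vm))) * Um = Da * W * Db * star W := by
    rw [hW, StarMul.star_mul, star_star]
    simp only [Matrix.mul_assoc]
  rw [hassoc2]
  rw [Matrix.trace]
  push_cast
  refine Finset.sum_congr rfl fun i _ => ?_
  rw [Matrix.diag_apply, Matrix.mul_apply]
  refine Finset.sum_congr rfl fun j _ => ?_
  rw [Matrix.star_eq_conjTranspose, Matrix.conjTranspose_apply]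
  have hms : (Da * W * Db) i j = (a i : ℂ) * W i j * (b j : ℂ) := by
    rw [Matrix.mul_diagonal, Matrix.diagonal_mul]
    simp only [Function.comp_apply]
  rw [hms]
  rw [show (a i : ℂ) * W i j * (b j : ℂ) * star (W i j)
      = (a i : ℂ) * (b j : ℂ) * (W i j * star (W i j)) by ring]
  rw [RCLike.star_def, Complex.mul_conj]

/-- Peierls–Bogoliubov / Gibbs variational inequality for matrices. -/
lemma peierls {d : ℕ} {ρ H : Matrix (Fin d) (Fin d) ℂ}
    (hρ : ρ.PosSemidef) (hρtr : ρ.trace = 1) (hH : H.IsHermitian) :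
    ((ρ * H).trace).re ≤ ((ρ * matLog ρ).trace).re + Real.log (((matExp H).trace).re) := by
  have hρH : ρ.IsHermitian := hρ.1
  set U := hρH.eigenvectorUnitary with hU
  set V := hH.eigenvectorUnitary with hV
  set p := hρH.eigenvalues with hp
  set h := hH.eigenvalues with hh
  have hρdec : ρ = (U : Matrix (Fin d) (Fin d) ℂ) * diagonal (Complex.ofReal ∘ p) *
      star (U : Matrix (Fin d) (Fin d) ℂ) := hρH.spectral_theorem
  have hHdec : H = (V : Matrix (Fin d) (Fin d) ℂ) * diagonal (Complex.ofReal ∘ h) *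
      star (V : Matrix (Fin d) (Fin d) ℂ) := hH.spectral_theorem
  have hLog : matLog ρ = (U : Matrix (Fin d) (Fin d) ℂ) *
      diagonal (Complex.ofReal ∘ (Real.log ∘ p)) * star (U : Matrix (Fin d) (Fin d) ℂ) := by
    rw [matLog, hρH.cfc_eq]
    rfl
  have hExp : matExp H = (V : Matrix (Fin d) (Fin d) ℂ) *
      diagonal (Complex.ofReal ∘ (Real.exp ∘ h)) * star (V : Matrix (Fin d) (Fin d) ℂ) := by
    rw [matExp, hH.cfc_eq]
    rfl
  set W : Matrix (Fin d) (Fin d) ℂ :=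
    star (U : Matrix (Fin d) (Fin d) ℂ) * (V : Matrix (Fin d) (Fin d) ℂ) with hWdef
  have hWW : W * star W = 1 := by
    have hmid : (V : Matrix (Fin d) (Fin d) ℂ) *
        (star (V : Matrix (Fin d) (Fin d) ℂ) * (U : Matrix (Fin d) (Fin d) ℂ))
        = (U : Matrix (Fin d) (Fin d) ℂ) := by
      rw [← Matrix.mul_assoc, (Matrix.mem_unitaryGroup_iff).mp V.2, one_mul]
    rw [hWdef, StarMul.star_mul, star_star]
    simp only [Matrix.mul_assoc]
    rw [hmid, (Matrix.mem_unitaryGroup_iff').mp U.2]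
  have hWW' : star W * W = 1 := by
    have hmid : (U : Matrix (Fin d) (Fin d) ℂ) *
        (star (U : Matrix (Fin d) (Fin d) ℂ) * (V : Matrix (Fin d) (Fin d) ℂ))
        = (V : Matrix (Fin d) (Fin d) ℂ) := by
      rw [← Matrix.mul_assoc, (Matrix.mem_unitaryGroup_iff).mp U.2, one_mul]
    rw [hWdef, StarMul.star_mul, star_star]
    simp only [Matrix.mul_assoc]
    rw [hmid, (Matrix.mem_unitaryGroup_iff').mp V.2]
  set c : Fin d → Fin d → ℝ := fun i j => Complex.normSq (W i j) with hcdef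
  -- trace computations
  have tr1 : ((ρ * H).trace).re = ∑ i, ∑ j, p i * h j * c i j := by
    conv_lhs => rw [hρdec, hHdec]
    rw [trace_conj_diag_mul U V p h, Complex.ofReal_re]
  have tr2 : ((ρ * matLog ρ).trace).re = ∑ i, p i * Real.log (p i) := by
    conv_lhs => rw [hLog, hρdec]
    rw [trace_conj_diag_mul U U p (Real.log ∘ p), Complex.ofReal_re]
    have hone : star (U : Matrix (Fin d) (Fin d) ℂ) * (U : Matrix (Fin d) (Fin d) ℂ) = 1 :=
      (Matrix.mem_unitaryGroup_iff').mp U.2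
    rw [hone]
    refine Finset.sum_congr rfl fun i _ => ?_
    rw [Finset.sum_eq_single i]
    · simp [Matrix.one_apply_eq]
    · intro j _ hj
      rw [Matrix.one_apply_ne (Ne.symm hj)]
      simp
    · intro habs
      exact absurd (Finset.mem_univ i) habs
  have tr3 : ((matExp H).trace).re = ∑ j, Real.exp (h j) := by
    rw [hExp, trace_conj_diag V (Real.exp ∘ h), Complex.ofReal_re]
    simp [Function.comp]
  -- properties of p, c
  have hppos : ∀ i, 0 ≤ p i := fun i => hρ.eigenvalues_nonneg i
  have hpsum : ∑ i, p i = 1 := by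
    have h1 : ((U : Matrix (Fin d) (Fin d) ℂ) * diagonal (Complex.ofReal ∘ p) *
        star (U : Matrix (Fin d) (Fin d) ℂ)).trace = 1 := by
      rw [← hρdec]; exact hρtr
    rw [trace_conj_diag U p] at h1
    exact_mod_cast h1
  have hcnn : ∀ i j, 0 ≤ c i j := fun i j => Complex.normSq_nonneg _
  have hrow : ∀ i, ∑ j, c i j = 1 := by
    intro i
    have h1 : (W * star W) i i = 1 := by rw [hWW, Matrix.one_apply_eq]
    rw [Matrix.mul_apply] at h1
    have h2 := congrArg Complex.re h1
    rw [Complex.re_sum, Complex.one_re] at h2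
    rw [← h2]
    refine Finset.sum_congr rfl fun j _ => ?_
    show Complex.normSq (W i j) = _
    rw [Matrix.star_apply, RCLike.star_def, Complex.mul_conj, Complex.ofReal_re]
  have hcol : ∀ j, ∑ i, c i j = 1 := by
    intro j
    have h1 : (star W * W) j j = 1 := by rw [hWW', Matrix.one_apply_eq]
    rw [Matrix.mul_apply] at h1
    have h2 := congrArg Complex.re h1
    rw [Complex.re_sum, Complex.one_re] at h2
    rw [← h2]
    refine Finset.sum_congr rfl fun i _ => ?_
    show Complex.normSq (W i j) = _
    rw [Matrix.star_apply, RCLike.star_def, mul_comm, Complex.mul_conj, Complex.ofReal_re]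
  rw [tr1, tr2, tr3]
  exact scalar_core p h c hppos hpsum hcnn hrow hcol

end ApproxTensorAux

/-- For conditional expectations `E^M, E₁, E₂` onto
`M ⊆ N₁, N₂ ⊆ N` compatible with a common full-rank state, writing
`ρⱼ = E_{j*}(ρ)` and `ρ_M = E^M_*(ρ)`, one has
`D(ρ‖ρ_M) ≤ D(ρ‖ρ₁) + D(ρ‖ρ₂) + log Tr[exp(−log ρ_M + log ρ₁ + log ρ₂)]`. -/
theorem approximate_tensorization_technical_lemma
    {d : ℕ} (Malg N1 N2 Nalg : StarSubalgebra ℂ (Matrix (Fin d) (Fin d) ℂ))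
    (hMN1 : Malg ≤ N1) (hMN2 : Malg ≤ N2) (hN1 : N1 ≤ Nalg) (hN2 : N2 ≤ Nalg)
    (σ : Matrix (Fin d) (Fin d) ℂ) (hσ : σ.PosDef) (hσtr : σ.trace = 1)
    (EM E1 E2 EMs E1s E2s : Matrix (Fin d) (Fin d) ℂ →ₗ[ℂ] Matrix (Fin d) (Fin d) ℂ)
    (hEMrange : ∀ X, EM X ∈ Malg) (hE1range : ∀ X, E1 X ∈ N1) (hE2range : ∀ X, E2 X ∈ N2)
    (hEMid : ∀ X ∈ Malg, EM X = X) (hE1id : ∀ X ∈ N1, E1 X = X) (hE2id : ∀ X ∈ N2, E2 X = X)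
    (hEMunital : EM 1 = 1) (hE1unital : E1 1 = 1) (hE2unital : E2 1 = 1)
    (hEMpos : ∀ X : Matrix (Fin d) (Fin d) ℂ, X.PosSemidef → (EM X).PosSemidef)
    (hE1pos : ∀ X : Matrix (Fin d) (Fin d) ℂ, X.PosSemidef → (E1 X).PosSemidef)
    (hE2pos : ∀ X : Matrix (Fin d) (Fin d) ℂ, X.PosSemidef → (E2 X).PosSemidef)
    (hEMcomp1 : ∀ X, EM (E1 X) = EM X) (hEMcomp2 : ∀ X, EM (E2 X) = EM X)
    (hEMσ : ∀ X, (σ * EM X).trace = (σ * X).trace)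
    (hE1σ : ∀ X, (σ * E1 X).trace = (σ * X).trace)
    (hE2σ : ∀ X, (σ * E2 X).trace = (σ * X).trace)
    (hEMs : ∀ X Y, (EMs X * Y).trace = (X * EM Y).trace)
    (hE1s : ∀ X Y, (E1s X * Y).trace = (X * E1 Y).trace)
    (hE2s : ∀ X Y, (E2s X * Y).trace = (X * E2 Y).trace)
    (ρ : Matrix (Fin d) (Fin d) ℂ) (hρ : ρ.PosSemidef) (hρtr : ρ.trace = 1) :
    relEnt ρ (EMs ρ) ≤ relEnt ρ (E1s ρ) + relEnt ρ (E2s ρ)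
      + Real.log (((matExp (-(matLog (EMs ρ)) + matLog (E1s ρ) + matLog (E2s ρ))).trace).re) := by
  have hM : IsSelfAdjoint (matLog (EMs ρ)) := cfc_predicate _ _
  have h1 : IsSelfAdjoint (matLog (E1s ρ)) := cfc_predicate _ _
  have h2 : IsSelfAdjoint (matLog (E2s ρ)) := cfc_predicate _ _
  have hH : IsSelfAdjoint (-(matLog (EMs ρ)) + matLog (E1s ρ) + matLog (E2s ρ)) :=
    (hM.neg.add h1).add h2
  have hHherm : (-(matLog (EMs ρ)) + matLog (E1s ρ) + matLog (E2s ρ)).IsHermitian := hH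
  have key := ApproxTensorAux.peierls hρ hρtr hHherm
  simp only [mul_add, mul_neg, Matrix.trace_add, Matrix.trace_neg, Complex.add_re,
    Complex.neg_re] at key
  simp only [relEnt, mul_sub, Matrix.trace_sub, Complex.sub_re]
  linarith

end
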